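/- Let a, b, c, d, e, f be real numbers and for t ∈ ℝ let A(t) = [[a,d,e],[d,b,f],[e,f,c+t]] (i.e., A(t) = B₁ + t·diag(0,0,1)). Let Γ(t) denote the discriminant of the characteristic polynomial of A(t). Then the coefficient of t⁴ in the polynomial Γ(t) equals (a−b)² + 4d². -/

import Mathlib

/-- The discriminant of a monic cubic polynomial `λ³ + p λ² + q λ + r`,
expressed through its coefficients. -/
noncomputable def cubicDiscrim (P : Polynomial ℝ) : ℝ :=
  let p := P.coeff 2
  let q := P.coeff 1
  let r := P.coeff 0
  18 * p * q * r - 4 * p ^ 3 * r + p ^ 2 * q ^ 2 - 4 * q ^ 3 - 27 * r ^ 2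

/-!
The characteristic polynomial of `A(t)` is `λ³ - tr λ² + m λ - det`, whose coefficients are
affine in `t` with slopes `1`, `a + b` and `a b - d²` (the minor complementary to the moving
entry). In `18 p q r - 4 p³ r + p² q² - 4 q³ - 27 r²` only `p² q²` and `-4 p³ r` reach degree
four in `t`, contributing `(a + b)² - 4 (a b - d²) = (a - b)² + 4 d²`.
-/

open Polynomial

section
variable {R : Type*} [CommRing R]

def cubicDiscrimForm (p q r : R) : R :=
  18 * p * q * r - 4 * p ^ 3 * r + p ^ 2 * q ^ 2 - 4 * q ^ 3 - 27 * r ^ 2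

lemma map_cubicDiscrimForm {S : Type*} [CommRing S] (φ : R →+* S) (p q r : R) :
    φ (cubicDiscrimForm p q r) = cubicDiscrimForm (φ p) (φ q) (φ r) := by
  simp [cubicDiscrimForm, map_ofNat]

lemma exists_quartic_cubicDiscrimForm_linear (p₀ q₀ r₀ u v : R) :
    ∃ coeffs : Fin 5 → R, coeffs 4 = u ^ 2 - 4 * v ∧
      ∀ t, cubicDiscrimForm (-(p₀ + t)) (q₀ + u * t) (-(r₀ + v * t)) =
        ∑ i : Fin 5, coeffs i * t ^ (i : ℕ) := by
  set P : R[X] :=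
    cubicDiscrimForm (-(C p₀ + X)) (C q₀ + C u * X) (-(C r₀ + C v * X)) with hP
  have hdeg : P.natDegree < 5 := by
    rw [hP, cubicDiscrimForm]; compute_degree!
  refine ⟨fun i => P.coeff i, ?_, fun t => ?_⟩
  · show P.coeff 4 = _
    rw [hP, cubicDiscrimForm]
    compute_degree!
    ring
  · have heval := map_cubicDiscrimForm (evalRingHom t)
      (-(C p₀ + X)) (C q₀ + C u * X) (-(C r₀ + C v * X))
    simp only [coe_evalRingHom, eval_neg, eval_add, eval_C, eval_X, eval_mul] at heval
    rw [← heval, ← hP, eval_eq_sum_range' hdeg,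
      Fin.sum_univ_eq_sum_range (fun i => P.coeff i * t ^ i)]

end

lemma Matrix.charpoly_fin_three {R : Type*} [CommRing R] (M : Matrix (Fin 3) (Fin 3) R) :
    M.charpoly = X ^ 3 - C M.trace * X ^ 2
      + C (M 0 0 * M 1 1 - M 0 1 * M 1 0 + M 0 0 * M 2 2 - M 0 2 * M 2 0
        + M 1 1 * M 2 2 - M 1 2 * M 2 1) * X - C M.det := by
  rw [Matrix.charpoly, Matrix.det_fin_three, Matrix.det_fin_three, Matrix.trace_fin_three]
  simp only [Matrix.charmatrix_apply, Matrix.diagonal_apply, Fin.reduceEq, ↓reduceIte, map_add,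
    map_sub, map_mul]
  ring

lemma cubicDiscrim_charpoly_fin_three (M : Matrix (Fin 3) (Fin 3) ℝ) :
    cubicDiscrim M.charpoly = cubicDiscrimForm (-M.trace)
      (M 0 0 * M 1 1 - M 0 1 * M 1 0 + M 0 0 * M 2 2 - M 0 2 * M 2 0
        + M 1 1 * M 2 2 - M 1 2 * M 2 1) (-M.det) := by
  rw [cubicDiscrim, M.charpoly_fin_three]
  simp [coeff_X, coeff_C, coeff_X_pow, cubicDiscrimForm]

theorem discriminant_t4_coefficient
    (a b c d e f : ℝ)
    (A : ℝ → Matrix (Fin 3) (Fin 3) ℝ)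
    (hA : ∀ t, A t = !![a, d, e; d, b, f; e, f, c + t])
    (Γ : ℝ → ℝ) (hΓ : ∀ t, Γ t = cubicDiscrim (A t).charpoly) :
    ∃ coeffs : Fin 5 → ℝ, coeffs 4 = (a - b) ^ 2 + 4 * d ^ 2 ∧
      ∀ t, Γ t = ∑ i : Fin 5, coeffs i * t ^ (i : ℕ) := by
  obtain ⟨coeffs, h4, hΓt⟩ := exists_quartic_cubicDiscrimForm_linear (a + b + c)
    (a * b + a * c + b * c - d ^ 2 - e ^ 2 - f ^ 2)
    (a * b * c + 2 * d * e * f - a * f ^ 2 - b * e ^ 2 - c * d ^ 2) (a + b) (a * b - d ^ 2)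
  refine ⟨coeffs, by rw [h4]; ring, fun t => ?_⟩
  rw [hΓ, ← hΓt, cubicDiscrim_charpoly_fin_three, hA]
  simp only [Matrix.trace_fin_three, Matrix.det_fin_three, Matrix.of_apply, Matrix.cons_val',
    Matrix.cons_val_zero, Matrix.cons_val_one, Matrix.cons_val, Matrix.cons_val_fin_one]
  congr 1 <;> ring
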